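/- arXiv:1208.1199 — 4 statements merged into one kernel-verified Lean document; each statement's English description precedes it below -/
import Mathlib

section
/- Let y, b ∈ W^{1,1}(0,T) satisfy y'(t) = g(y(t)) + b'(t) on [0,T] with y(0) = y⁰, where g ∈ C(ℝ) with g(ζ) → -∞ as ζ → ∞. Suppose b(t₂) - b(t₁) ≤ N₀ + N₁(t₂ - t₁) for all 0 ≤ t₁ < t₂ ≤ T, with constants N₀ ≥ 0, N₁ ≥ 0. If ζ̄ is a constant such that g(ζ) ≤ -N₁ for all ζ ≥ ζ̄, then y(t) ≤ max{y⁰, ζ̄} + N₀ for all t ∈ [0,T]. -/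
/-!
Let `M = max y0 ζbar` and `t` a time with `M < y t`. If `s < t` is the last time with
`y s ≤ M`, the solution stays above `ζbar` on `(s, t]`, so there `y' ≤ b' - N1`.
Integrating over `[s, t]` and using the growth bound on `b` gives
`y t ≤ y s + N0 + N1 (t - s) - N1 (t - s) ≤ M + N0`.
-/

open Set Filter

theorem sub_le_sub_of_hasDerivAt_le {u v u' v' : ℝ → ℝ} {a c : ℝ}
    (hu : ∀ t ∈ Icc a c, HasDerivAt u (u' t) t) (hv : ∀ t ∈ Icc a c, HasDerivAt v (v' t) t)
    (hle : ∀ t ∈ Ioo a c, u' t ≤ v' t) (hac : a ≤ c) :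
    u c - u a ≤ v c - v a := by
  have hmono : MonotoneOn (v - u) (Icc a c) := by
    refine monotoneOn_of_hasDerivWithinAt_nonneg (f' := v' - u') (convex_Icc a c)
      (fun t ht => ((hv t ht).sub (hu t ht)).continuousAt.continuousWithinAt) (fun t ht => ?_)
      (fun t ht => ?_)
    · rw [interior_Icc] at ht ⊢
      exact ((hv t (Ioo_subset_Icc_self ht)).sub (hu t (Ioo_subset_Icc_self ht))).hasDerivWithinAt
    · rw [interior_Icc] at ht
      exact sub_nonneg.mpr (hle t ht)
  have := hmono (left_mem_Icc.mpr hac) (right_mem_Icc.mpr hac) hac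
  simp only [Pi.sub_apply] at this
  linarith

theorem exists_last_le_of_continuousOn {y : ℝ → ℝ} {a c M : ℝ}
    (hy : ContinuousOn y (Icc a c)) (ha : y a ≤ M) (hac : a ≤ c) :
    ∃ s ∈ Icc a c, y s ≤ M ∧ ∀ t ∈ Ioc s c, M < y t := by
  set S := Icc a c ∩ y ⁻¹' Iic M
  have hS : IsClosed S := hy.preimage_isClosed_of_isClosed isClosed_Icc isClosed_Iic
  have hbdd : BddAbove S := ⟨c, fun t ht => ht.1.2⟩
  obtain ⟨hs, hys⟩ : sSup S ∈ S := hS.csSup_mem ⟨a, ⟨left_mem_Icc.mpr hac, ha⟩⟩ hbdd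
  refine ⟨sSup S, hs, hys, fun t ht => lt_of_not_ge fun hyt => ?_⟩
  exact (le_csSup hbdd ⟨⟨hs.1.trans ht.1.le, ht.2⟩, hyt⟩).not_gt ht.1

theorem zlotnik_inequality_general (T y0 N0 N1 ζbar : ℝ)
    (hN0 : 0 ≤ N0)
    (g : ℝ → ℝ)
    (y b y' b' : ℝ → ℝ)
    (hy : ∀ t ∈ Icc (0:ℝ) T, HasDerivAt y (y' t) t)
    (hb : ∀ t ∈ Icc (0:ℝ) T, HasDerivAt b (b' t) t)
    (heq : ∀ t ∈ Icc (0:ℝ) T, y' t = g (y t) + b' t)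
    (hy0 : y 0 = y0)
    (hbd : ∀ t1 t2 : ℝ, 0 ≤ t1 → t1 < t2 → t2 ≤ T →
      b t2 - b t1 ≤ N0 + N1 * (t2 - t1))
    (hζ : ∀ ζ : ℝ, ζbar ≤ ζ → g ζ ≤ -N1) :
    ∀ t ∈ Icc (0:ℝ) T, y t ≤ max y0 ζbar + N0 := by
  intro t ht
  set M := max y0 ζbar
  rcases le_or_gt (y t) M with hyt | hyt
  · linarith
  have hsub : Icc 0 t ⊆ Icc 0 T := Icc_subset_Icc_right ht.2
  obtain ⟨s, hs, hys, habove⟩ := exists_last_le_of_continuousOn (M := M)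
    (fun r hr => (hy r (hsub hr)).continuousAt.continuousWithinAt)
    (hy0 ▸ le_max_left y0 ζbar) ht.1
  have hst : s < t := lt_of_le_of_ne hs.2 fun h => (h ▸ hyt).not_ge hys
  have hIcc : Icc s t ⊆ Icc 0 T := (Icc_subset_Icc_left hs.1).trans hsub
  have hrise : y t - y s ≤ (b t - N1 * t) - (b s - N1 * s) := by
    refine sub_le_sub_of_hasDerivAt_le (v' := fun r => b' r - N1)
      (fun r hr => hy r (hIcc hr))
      (fun r hr => ((hb r (hIcc hr)).sub ((hasDerivAt_id r).const_mul N1)).congr_deriv (by ring))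
      (fun r hr => ?_) hst.le
    have hζr := hζ (y r) ((le_max_right y0 ζbar).trans (habove r ⟨hr.1, hr.2.le⟩).le)
    linarith [heq r (hIcc (Ioo_subset_Icc_self hr))]
  linarith [hbd s t hs.1 hst ht.2]

/-- Zlotnik's inequality (Appendix A). -/
theorem zlotnik_inequality (T y0 N0 N1 ζbar : ℝ) (hT : 0 < T)
    (hN0 : 0 ≤ N0) (hN1 : 0 ≤ N1)
    (g : ℝ → ℝ) (hg : Continuous g)
    (hgtop : Tendsto g atTop atBot)
    (y b y' b' : ℝ → ℝ)
    (hy : ∀ t ∈ Icc (0:ℝ) T, HasDerivAt y (y' t) t)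
    (hb : ∀ t ∈ Icc (0:ℝ) T, HasDerivAt b (b' t) t)
    (heq : ∀ t ∈ Icc (0:ℝ) T, y' t = g (y t) + b' t)
    (hy0 : y 0 = y0)
    (hbd : ∀ t1 t2 : ℝ, 0 ≤ t1 → t1 < t2 → t2 ≤ T →
      b t2 - b t1 ≤ N0 + N1 * (t2 - t1))
    (hζ : ∀ ζ : ℝ, ζbar ≤ ζ → g ζ ≤ -N1) :
    ∀ t ∈ Icc (0:ℝ) T, y t ≤ max y0 ζbar + N0 :=
  zlotnik_inequality_general T y0 N0 N1 ζbar hN0 g y b y' b' hy hb heq hy0 hbd hζ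
end

section
/- Let ρ : ℝ³ × [0,∞) → ℝ and u, θ with: 0 ≤ ρ(x,t) ≤ C_b for all (x,t), ∫_{ℝ³} ρ(x,t) dx = ∫_{ℝ³} ρ₀(x) dx for all t with ρ₀ ∈ L¹(ℝ³), ∫₀^∞ ‖∇u(·,t)‖²_{L²(ℝ³)} dt ≤ C_b², and u(·,t) ∈ L⁶(ℝ³) with the Sobolev inequality ‖u‖_{L⁶} ≤ C_S ‖∇u‖_{L²}. If the momentum is conserved, i.e. ∫_{ℝ³} ρ u dx = ∫_{ℝ³} ρ₀ u₀ dx for all t > 0, then ∫_{ℝ³} ρ₀ u₀ dx = 0. -/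
/-!
Hölder with exponents `6/5` and `6`, together with the interpolation
`‖ρ‖_{6/5}^{6/5} ≤ ‖ρ‖_∞^{1/5} ‖ρ‖_1` and the Sobolev inequality, bounds the momentum at time `t` by `K ‖∇u(t)‖_{L²}`, and
conservation of mass and momentum makes `K` and the momentum independent of `t`. A positive
constant is not square integrable on `(0, ∞)`, while `‖∇u(t)‖_{L²}` is, so the momentum vanishes.
-/

open Set MeasureTheory

noncomputable abbrev E3 : Type := EuclideanSpace ℝ (Fin 3)

open ENNReal

section
variable {α : Type*} [MeasurableSpace α] {μ : Measure α}

theorem eLpNorm'_le_eLpNorm_one_of_ae_enorm_le {ε : Type*} [ENorm ε] {f : α → ε} {p : ℝ}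
    (hp : 1 ≤ p) {C : ℝ≥0∞} (hC : C ≠ ∞) (hf : ∀ᵐ x ∂μ, ‖f x‖ₑ ≤ C) :
    eLpNorm' f p μ ≤ (C ^ (p - 1) * eLpNorm f 1 μ) ^ (1 / p) := by
  have hpow : ∀ᵐ x ∂μ, ‖f x‖ₑ ^ p ≤ C ^ (p - 1) * ‖f x‖ₑ := hf.mono fun x hx => by
    calc ‖f x‖ₑ ^ p = ‖f x‖ₑ ^ ((p - 1) + 1) := by ring_nf
      _ = ‖f x‖ₑ ^ (p - 1) * ‖f x‖ₑ := by
          rw [rpow_add_of_nonneg _ _ (by linarith) zero_le_one, rpow_one]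
      _ ≤ C ^ (p - 1) * ‖f x‖ₑ := by gcongr
  rw [eLpNorm', eLpNorm_one_eq_lintegral_enorm,
    ← lintegral_const_mul' _ _ (rpow_ne_top_of_nonneg (by linarith) hC)]
  gcongr ?_ ^ _
  exact lintegral_mono_ae hpow

theorem norm_integral_smul_le_of_ae_bound {E : Type*} [NormedAddCommGroup E] [NormedSpace ℝ E]
    {φ : α → ℝ} {f : α → E} {p : ℝ} {q : ℝ≥0∞} [HolderConjugate (.ofReal p) q] {C : ℝ}
    (hp : 1 ≤ p) (hC : 0 ≤ C) (hφ : Integrable φ μ) (hφC : ∀ᵐ x ∂μ, 0 ≤ φ x ∧ φ x ≤ C)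
    (hf : MemLp f q μ) :
    ‖∫ x, φ x • f x ∂μ‖ ≤ (C ^ (p - 1) * ∫ x, φ x ∂μ) ^ (1 / p) * (eLpNorm f q μ).toReal := by
  have hφ0 : 0 ≤ ∫ x, φ x ∂μ := integral_nonneg_of_ae (hφC.mono fun x hx => hx.1)
  have hφ1 : eLpNorm φ 1 μ = .ofReal (∫ x, φ x ∂μ) := by
    rw [eLpNorm_one_eq_lintegral_enorm, ← ofReal_integral_norm_eq_lintegral_enorm hφ]
    congr 1
    exact integral_congr_ae (hφC.mono fun x hx => Real.norm_of_nonneg hx.1)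
  have hφp : eLpNorm φ (.ofReal p) μ ≤ .ofReal ((C ^ (p - 1) * ∫ x, φ x ∂μ) ^ (1 / p)) := by
    rw [eLpNorm_eq_eLpNorm' (ofReal_pos.2 (by linarith)).ne' ofReal_ne_top, toReal_ofReal (by linarith)]
    refine (eLpNorm'_le_eLpNorm_one_of_ae_enorm_le hp ofReal_ne_top
      (hφC.mono fun x hx => (Real.enorm_of_nonneg hx.1).trans_le (ofReal_le_ofReal hx.2))).trans ?_
    rw [hφ1, ofReal_rpow_of_nonneg hC (by linarith), ← ofReal_mul (by positivity),
      ofReal_rpow_of_nonneg (by positivity) (by positivity)]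
  have holder : ‖∫ x, φ x • f x ∂μ‖ₑ ≤ eLpNorm φ (.ofReal p) μ * eLpNorm f q μ :=
    (enorm_integral_le_lintegral_enorm _).trans <| by
      rw [← eLpNorm_one_eq_lintegral_enorm]
      exact eLpNorm_smul_le_mul_eLpNorm hf.1 hφ.1
  have hbound := holder.trans (mul_le_mul_left hφp _)
  rw [← ofReal_norm, ← ofReal_toReal hf.eLpNorm_ne_top, ← ofReal_mul (by positivity)] at hbound
  exact (ofReal_le_ofReal_iff (by positivity)).1 hbound

theorem nonpos_of_ae_le_of_integrableOn {s : Set α} (hs : μ s = ∞) {f : α → ℝ}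
    (hf : IntegrableOn f s μ) {c : ℝ} (hc : ∀ᵐ x ∂μ.restrict s, c ≤ f x) : c ≤ 0 := by
  by_contra! hc0
  have hconst : IntegrableOn (fun _ => c) s μ :=
    hf.mono' aestronglyMeasurable_const
      (hc.mono fun x hx => by rwa [Real.norm_of_nonneg hc0.le])
  rw [integrableOn_const_iff] at hconst
  simp [hs, hc0.ne'] at hconst

end

instance holderConjugate_ofReal_six_fifths_six : HolderConjugate (.ofReal (6 / 5)) 6 := by
  rw [← ofReal_ofNat 6]
  exact (Real.holderConjugate_iff.2 ⟨by norm_num, by norm_num⟩).toNNReal.coe_ennreal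

theorem initial_momentum_zero_general
    (Cb CS : ℝ) (hCb : 0 < Cb)
    (ρ : ℝ → E3 → ℝ) (u : ℝ → E3 → E3) (ρ0 : E3 → ℝ) (u0 : E3 → E3)
    (hρbd : ∀ t : ℝ, 0 ≤ t → ∀ x : E3, 0 ≤ ρ t x ∧ ρ t x ≤ Cb)
    (hρint : ∀ t : ℝ, 0 ≤ t → Integrable (ρ t) volume)
    (hmass : ∀ t : ℝ, 0 ≤ t → (∫ x, ρ t x) = ∫ x, ρ0 x)
    (Du : ℝ → ℝ)
    (hDuint : IntegrableOn (fun t => (Du t) ^ 2) (Ioi (0:ℝ)) volume)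
    (hu6 : ∀ t : ℝ, 0 ≤ t → MemLp (u t) 6 volume)
    (hSob : ∀ t : ℝ, 0 ≤ t → (eLpNorm (u t) 6 volume).toReal ≤ CS * Du t)
    (hmom : ∀ t : ℝ, 0 < t → (∫ x, ρ t x • u t x) = ∫ x, ρ0 x • u0 x) :
    (∫ x, ρ0 x • u0 x) = 0 := by
  set P := ∫ x, ρ0 x • u0 x
  set B := (Cb ^ (6 / 5 - 1 : ℝ) * ∫ x, ρ0 x) ^ (1 / (6 / 5) : ℝ)
  have hB : 0 ≤ B := Real.rpow_nonneg (mul_nonneg (by positivity)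
    (hmass 0 le_rfl ▸ integral_nonneg fun x => (hρbd 0 le_rfl x).1)) _
  have hbound : ∀ t ∈ Ioi (0 : ℝ), ‖P‖ ≤ B * (CS * Du t) := fun t ht => by
    have hP := norm_integral_smul_le_of_ae_bound (p := 6 / 5) (by norm_num) hCb.le
      (hρint t ht.le) (ae_of_all _ (hρbd t ht.le)) (hu6 t ht.le)
    rw [hmass t ht.le, hmom t ht] at hP
    exact hP.trans (mul_le_mul_of_nonneg_left (hSob t ht.le) hB)
  have hsq : ∀ t ∈ Ioi (0 : ℝ), ‖P‖ ^ 2 ≤ (B * CS) ^ 2 * Du t ^ 2 := fun t ht => by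
    rw [← mul_pow, mul_assoc]
    gcongr
    exact hbound t ht
  have hP0 := nonpos_of_ae_le_of_integrableOn Real.volume_Ioi (hDuint.const_mul ((B * CS) ^ 2))
    (ae_restrict_of_forall_mem measurableSet_Ioi hsq)
  exact norm_le_zero_iff.1 (by nlinarith [norm_nonneg P])

/-- Proposition 5.1, momentum case: a globally bounded solution conserving mass and
momentum, with Dirichlet energy integrable in time, must have zero initial momentum. -/
theorem initial_momentum_zero
    (Cb CS : ℝ) (hCb : 0 < Cb) (hCS : 0 < CS)
    (ρ : ℝ → E3 → ℝ) (u : ℝ → E3 → E3) (ρ0 : E3 → ℝ) (u0 : E3 → E3)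
    (hρbd : ∀ t : ℝ, 0 ≤ t → ∀ x : E3, 0 ≤ ρ t x ∧ ρ t x ≤ Cb)
    (hρ0int : Integrable ρ0 volume)
    (hρint : ∀ t : ℝ, 0 ≤ t → Integrable (ρ t) volume)
    (hmass : ∀ t : ℝ, 0 ≤ t → (∫ x, ρ t x) = ∫ x, ρ0 x)
    (Du : ℝ → ℝ) (hDu0 : ∀ t, 0 ≤ Du t)
    (hDuint : IntegrableOn (fun t => (Du t) ^ 2) (Ioi (0:ℝ)) volume)
    (hDu : (∫ t in Ioi (0:ℝ), (Du t) ^ 2) ≤ Cb ^ 2)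
    (hu6 : ∀ t : ℝ, 0 ≤ t → MemLp (u t) 6 volume)
    (hSob : ∀ t : ℝ, 0 ≤ t → (eLpNorm (u t) 6 volume).toReal ≤ CS * Du t)
    (hmomint : ∀ t : ℝ, 0 ≤ t → Integrable (fun x => ρ t x • u t x) volume)
    (hmom : ∀ t : ℝ, 0 < t → (∫ x, ρ t x • u t x) = ∫ x, ρ0 x • u0 x) :
    (∫ x, ρ0 x • u0 x) = 0 :=
  initial_momentum_zero_general Cb CS hCb ρ u ρ0 u0 hρbd hρint hmass Du hDuint hu6 hSob hmom
end

section
/- Let ρ ≥ 0, θ ≥ 0 with ρ θ measurable, and suppose 0 ≤ ρ ≤ C_b, ρ(·,t) ∈ L¹(ℝ³) with ∫ρ = ∫ρ₀ for all t, ∫₀^∞ (‖∇u‖²_{L²} + ‖∇θ‖²_{L²}) dt ≤ 2C_b², and the Sobolev inequalities ‖u‖_{L⁶} ≤ C‖∇u‖_{L²}, ‖θ‖_{L⁶} ≤ C‖∇θ‖_{L²} hold for each t. If the energy ∫_{ℝ³}(ρ|u|²/2 + ρθ) dx is constant in t, then its common value is zero. -/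
/-!
Split each of `ρ|u|²` and `ρθ` at a level `R`: where `|u|² ≤ R` (resp. `θ ≤ R`) the term is at most
`R ρ`, and elsewhere the bound `ρ ≤ C_b` makes it at most `C_b R⁻² |u|⁶` (resp. `C_b R⁻⁵ θ⁶`). Hence
`E ≤ (3R/2) ∫ρ₀ + K_R (‖∇u‖² + ‖∇θ‖²)³` at every time, by mass conservation and Sobolev. Since
`‖∇u‖² + ‖∇θ‖²` is integrable on `(0, ∞)`, it takes values arbitrarily close to `0`; letting it, and
then `R`, tend to `0` gives `E ≤ 0`, while `E ≥ 0` is clear.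
-/

open Set MeasureTheory
open scoped ENNReal

lemma mul_le_mul_add_div_pow_mul_pow_succ {r s C R : ℝ} (n : ℕ) (hr : 0 ≤ r) (hrC : r ≤ C)
    (hs : 0 ≤ s) (hR : 0 < R) : r * s ≤ R * r + C / R ^ n * s ^ (n + 1) := by
  have hC : 0 ≤ C := hr.trans hrC
  rcases le_or_gt s R with hsR | hRs
  · have : r * s ≤ R * r := by nlinarith
    have : 0 ≤ C / R ^ n * s ^ (n + 1) := by positivity
    linarith
  · have hRn : R ^ n ≤ s ^ n := pow_le_pow_left₀ hR.le hRs.le n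
    calc r * s ≤ C * s := mul_le_mul_of_nonneg_right hrC hs
      _ = C / R ^ n * (R ^ n * s) := by field_simp
      _ ≤ C / R ^ n * (s ^ n * s) := by gcongr
      _ ≤ R * r + C / R ^ n * s ^ (n + 1) := by rw [← pow_succ]; nlinarith

section

variable {α : Type*} [MeasurableSpace α] {μ : Measure α}

lemma integral_norm_pow_eq_toReal_eLpNorm_pow {F : Type*} [NormedAddCommGroup F] {f : α → F}
    {p : ℕ} (hp : p ≠ 0) (hf : MemLp f p μ) :
    ∫ x, ‖f x‖ ^ p ∂μ = (eLpNorm f p μ).toReal ^ p := by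
  rw [toReal_eLpNorm hf.1, lpNorm_eq_integral_norm_rpow_toReal (by simpa) (by simp) hf.1]
  simp only [ENNReal.toReal_natCast, Real.rpow_natCast]
  exact (Real.rpow_inv_natCast_pow (integral_nonneg fun _ => by positivity) hp).symm

lemma zero_mem_closure_image_of_integrableOn {s : Set α} {f : α → ℝ} (hf : IntegrableOn f s μ)
    (hs : MeasurableSet s) (hμs : μ s = ∞) (hf0 : ∀ x ∈ s, 0 ≤ f x) : (0 : ℝ) ∈ closure (f '' s) := by
  refine Metric.mem_closure_iff.2 fun δ hδ => ?_
  by_contra! hfar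
  have hconst : IntegrableOn (fun _ => δ) s μ := by
    refine hf.mono' aestronglyMeasurable_const ((ae_restrict_iff' hs).2 (.of_forall fun x hx => ?_))
    simpa [abs_of_nonneg hδ.le, abs_of_nonneg (hf0 x hx)] using hfar (f x) (mem_image_of_mem f hx)
  simp [hμs, hδ.ne'] at hconst

lemma integral_kinetic_add_thermal_le {F : Type*} [NormedAddCommGroup F] {ρ θ : α → ℝ}
    {v : α → F} {C R : ℝ} (hρ : ∀ x, 0 ≤ ρ x ∧ ρ x ≤ C) (hθ : ∀ x, 0 ≤ θ x)
    (hρi : Integrable ρ μ) (hv : MemLp v 6 μ) (hθ6 : MemLp θ 6 μ) (hR : 0 < R) :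
    ∫ x, (ρ x * ‖v x‖ ^ 2 / 2 + ρ x * θ x) ∂μ ≤
      3 * R / 2 * ∫ x, ρ x ∂μ + C / (2 * R ^ 2) * (eLpNorm v 6 μ).toReal ^ 6
        + C / R ^ 5 * (eLpNorm θ 6 μ).toReal ^ 6 := by
  have hvi : Integrable (fun x => ‖v x‖ ^ 6) μ := hv.integrable_norm_pow (p := 6) (by norm_num)
  have hθi : Integrable (fun x => ‖θ x‖ ^ 6) μ := hθ6.integrable_norm_pow (p := 6) (by norm_num)
  calc ∫ x, (ρ x * ‖v x‖ ^ 2 / 2 + ρ x * θ x) ∂μ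
      ≤ ∫ x, (3 * R / 2 * ρ x + C / (2 * R ^ 2) * ‖v x‖ ^ 6 + C / R ^ 5 * ‖θ x‖ ^ 6) ∂μ := by
        refine integral_mono_of_nonneg (.of_forall fun x => ?_)
          (((hρi.const_mul _).add (hvi.const_mul _)).add (hθi.const_mul _)) (.of_forall fun x => ?_)
        · obtain ⟨hρ0, -⟩ := hρ x
          have := hθ x
          dsimp only [Pi.zero_apply]
          positivity
        dsimp only
        obtain ⟨hρ0, hρC⟩ := hρ x
        have hkin := mul_le_mul_add_div_pow_mul_pow_succ 2 hρ0 hρC (sq_nonneg ‖v x‖) hR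
        have hth := mul_le_mul_add_div_pow_mul_pow_succ 5 hρ0 hρC (hθ x) hR
        rw [Real.norm_of_nonneg (hθ x)]
        linear_combination hkin / 2 + hth
    _ = _ := by
        rw [integral_add, integral_add, integral_const_mul, integral_const_mul,
          integral_const_mul, integral_norm_pow_eq_toReal_eLpNorm_pow (p := 6) (by norm_num) hv,
          integral_norm_pow_eq_toReal_eLpNorm_pow (p := 6) (by norm_num) hθ6, Nat.cast_ofNat]
        all_goals fun_prop

lemma integral_kinetic_add_thermal_le_of_eLpNorm_le {F : Type*} [NormedAddCommGroup F]
    {ρ θ : α → ℝ} {v : α → F} {C R a b : ℝ} (hC : 0 ≤ C) (hρ : ∀ x, 0 ≤ ρ x ∧ ρ x ≤ C)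
    (hθ : ∀ x, 0 ≤ θ x) (hρi : Integrable ρ μ) (hv : MemLp v 6 μ) (hθ6 : MemLp θ 6 μ)
    (hva : (eLpNorm v 6 μ).toReal ≤ a) (hθb : (eLpNorm θ 6 μ).toReal ≤ b) (hR : 0 < R) :
    ∫ x, (ρ x * ‖v x‖ ^ 2 / 2 + ρ x * θ x) ∂μ ≤
      3 / 2 * (∫ x, ρ x ∂μ) * R + (C / (2 * R ^ 2) + C / R ^ 5) * (a ^ 2 + b ^ 2) ^ 3 := by
  have hpow (c d e : ℝ) (hc : 0 ≤ c) (hcd : c ≤ d) : c ^ 6 ≤ (d ^ 2 + e ^ 2) ^ 3 :=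
    calc c ^ 6 = (c ^ 2) ^ 3 := by ring
      _ ≤ (d ^ 2 + e ^ 2) ^ 3 := by gcongr; nlinarith [sq_nonneg e]
  calc ∫ x, (ρ x * ‖v x‖ ^ 2 / 2 + ρ x * θ x) ∂μ
      ≤ 3 * R / 2 * ∫ x, ρ x ∂μ + C / (2 * R ^ 2) * (eLpNorm v 6 μ).toReal ^ 6
        + C / R ^ 5 * (eLpNorm θ 6 μ).toReal ^ 6 :=
        integral_kinetic_add_thermal_le hρ hθ hρi hv hθ6 hR
    _ ≤ 3 * R / 2 * ∫ x, ρ x ∂μ + C / (2 * R ^ 2) * (a ^ 2 + b ^ 2) ^ 3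
        + C / R ^ 5 * (b ^ 2 + a ^ 2) ^ 3 := by
        gcongr
        exacts [hpow _ _ b ENNReal.toReal_nonneg hva, hpow _ _ a ENNReal.toReal_nonneg hθb]
    _ = _ := by ring

end

lemma nonpos_of_forall_le_mul_add_mul {E a : ℝ} {S : Set ℝ} {φ K : ℝ → ℝ}
    (hS : (0 : ℝ) ∈ closure S) (hφ : Continuous φ) (hφ0 : φ 0 = 0)
    (h : ∀ R > 0, ∀ x ∈ S, E ≤ a * R + K R * φ x) : E ≤ 0 := by
  have hR : ∀ R ∈ Ioi (0 : ℝ), E ≤ a * R := fun R hR => by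
    simpa [hφ0] using le_on_closure (f := fun _ => E) (g := fun x => a * R + K R * φ x) (h R hR)
      continuousOn_const (by fun_prop) hS
  simpa using le_on_closure (f := fun _ => E) (g := fun R => a * R) hR continuousOn_const
    (by fun_prop) (by simp : (0 : ℝ) ∈ closure (Ioi 0))

theorem conserved_energy_zero_general
    (Cb CS Ev : ℝ) (hCb : 0 < Cb)
    (ρ : ℝ → E3 → ℝ) (u : ℝ → E3 → E3) (θ : ℝ → E3 → ℝ) (ρ0 : E3 → ℝ)
    (hρbd : ∀ t : ℝ, 0 ≤ t → ∀ x : E3, 0 ≤ ρ t x ∧ ρ t x ≤ Cb)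
    (hθ0 : ∀ t : ℝ, 0 ≤ t → ∀ x : E3, 0 ≤ θ t x)
    (hρint : ∀ t : ℝ, 0 ≤ t → Integrable (ρ t) volume)
    (hmass : ∀ t : ℝ, 0 ≤ t → (∫ x, ρ t x) = ∫ x, ρ0 x)
    (Du Dθ : ℝ → ℝ)
    (hDint : IntegrableOn (fun t => (Du t) ^ 2 + (Dθ t) ^ 2) (Ioi (0:ℝ)) volume)
    (hu6 : ∀ t : ℝ, 0 ≤ t → MemLp (u t) 6 volume)
    (hθ6 : ∀ t : ℝ, 0 ≤ t → MemLp (θ t) 6 volume)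
    (hSobu : ∀ t : ℝ, 0 ≤ t → (eLpNorm (u t) 6 volume).toReal ≤ CS * Du t)
    (hSobθ : ∀ t : ℝ, 0 ≤ t → (eLpNorm (θ t) 6 volume).toReal ≤ CS * Dθ t)
    (hE : ∀ t : ℝ, 0 ≤ t →
      (∫ x, (ρ t x * ‖u t x‖ ^ 2 / 2 + ρ t x * θ t x)) = Ev) :
    Ev = 0 := by
  have hEv0 : 0 ≤ Ev := by
    rw [← hE 0 le_rfl]
    refine integral_nonneg fun x => ?_
    obtain ⟨hρ0, -⟩ := hρbd 0 le_rfl x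
    have := hθ0 0 le_rfl x
    positivity
  have hD0 : (0 : ℝ) ∈ closure ((fun t => Du t ^ 2 + Dθ t ^ 2) '' Ioi 0) :=
    zero_mem_closure_image_of_integrableOn hDint measurableSet_Ioi Real.volume_Ioi
      fun t _ => by positivity
  have hbound : ∀ R > 0, ∀ t > 0, Ev ≤ 3 / 2 * (∫ x, ρ0 x) * R
      + (Cb / (2 * R ^ 2) + Cb / R ^ 5) * (CS ^ 2 * (Du t ^ 2 + Dθ t ^ 2)) ^ 3 := by
    intro R hR t ht
    have h := integral_kinetic_add_thermal_le_of_eLpNorm_le hCb.le (hρbd t ht.le) (hθ0 t ht.le)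
      (hρint t ht.le) (hu6 t ht.le) (hθ6 t ht.le) (hSobu t ht.le) (hSobθ t ht.le) hR
    rw [hE t ht.le, hmass t ht.le] at h
    simpa only [mul_pow, ← mul_add] using h
  exact le_antisymm (nonpos_of_forall_le_mul_add_mul (φ := fun x => (CS ^ 2 * x) ^ 3) hD0
    (by fun_prop) (by simp) fun R hR _ ⟨t, ht, hx⟩ => by subst hx; exact hbound R hR t ht) hEv0

/-- Proposition 5.1, energy case: a globally bounded solution conserving mass and
energy, with Dirichlet energies integrable in time, must have zero total energy. -/
theorem conserved_energy_zero
    (Cb CS Ev : ℝ) (hCb : 0 < Cb) (hCS : 0 < CS)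
    (ρ : ℝ → E3 → ℝ) (u : ℝ → E3 → E3) (θ : ℝ → E3 → ℝ) (ρ0 : E3 → ℝ)
    (hρbd : ∀ t : ℝ, 0 ≤ t → ∀ x : E3, 0 ≤ ρ t x ∧ ρ t x ≤ Cb)
    (hθ0 : ∀ t : ℝ, 0 ≤ t → ∀ x : E3, 0 ≤ θ t x)
    (hρ0int : Integrable ρ0 volume)
    (hρint : ∀ t : ℝ, 0 ≤ t → Integrable (ρ t) volume)
    (hmass : ∀ t : ℝ, 0 ≤ t → (∫ x, ρ t x) = ∫ x, ρ0 x)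
    (Du Dθ : ℝ → ℝ) (hDu0 : ∀ t, 0 ≤ Du t) (hDθ0 : ∀ t, 0 ≤ Dθ t)
    (hDint : IntegrableOn (fun t => (Du t) ^ 2 + (Dθ t) ^ 2) (Ioi (0:ℝ)) volume)
    (hD : (∫ t in Ioi (0:ℝ), ((Du t) ^ 2 + (Dθ t) ^ 2)) ≤ 2 * Cb ^ 2)
    (hu6 : ∀ t : ℝ, 0 ≤ t → MemLp (u t) 6 volume)
    (hθ6 : ∀ t : ℝ, 0 ≤ t → MemLp (θ t) 6 volume)
    (hSobu : ∀ t : ℝ, 0 ≤ t → (eLpNorm (u t) 6 volume).toReal ≤ CS * Du t)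
    (hSobθ : ∀ t : ℝ, 0 ≤ t → (eLpNorm (θ t) 6 volume).toReal ≤ CS * Dθ t)
    (hEint : ∀ t : ℝ, 0 ≤ t →
      Integrable (fun x => ρ t x * ‖u t x‖ ^ 2 / 2 + ρ t x * θ t x) volume)
    (hE : ∀ t : ℝ, 0 ≤ t →
      (∫ x, (ρ t x * ‖u t x‖ ^ 2 / 2 + ρ t x * θ t x)) = Ev) :
    Ev = 0 :=
  conserved_energy_zero_general Cb CS Ev hCb ρ u θ ρ0 hρbd hθ0 hρint hmass Du Dθ hDint hu6 hθ6 hSobu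
    hSobθ hE
end

section
/- Let q ∈ (3,6), and let f, g : [0,T] → [0,∞) satisfy ∫₀ᵀ t·f(t)² dt ≤ C and ∫₀ᵀ t·g(t)² dt ≤ C with sup_t t f(t)² ≤ C. Then the function h(t) = f(t)^{(6-q)/(2q)} g(t)^{(3q-6)/(2q)} satisfies h(t) ≤ C' t^{-2q/(q+6)} + C' t g(t)², and in particular h ∈ L¹([0,T]). -/
open Set MeasureTheory

/-!
Since `t f(t)² ≤ C`, we have `f^α ≤ C^{α/2} t^{-α/2}`, and `g^β = (t g²)^{β/2} t^{-β/2}`; with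
`α + β = 1` this gives `f^α g^β ≤ C^{α/2} (t g²)^{β/2} t^{-1/2}`. Young's inequality with
weights `β/2` and `1 - β/2` splits the last product into `t g² + t^{-1/(2-β)}`, and
`1/(2-β) = 2q/(q+6) < 1` exactly when `q < 6`, so both terms are integrable on `(0, T]`.
-/

theorem rpow_mul_rpow_one_sub_le_add {x y θ : ℝ} (hx : 0 ≤ x) (hy : 0 ≤ y)
    (hθ0 : 0 ≤ θ) (hθ1 : θ ≤ 1) : x ^ θ * y ^ (1 - θ) ≤ x + y :=
  calc x ^ θ * y ^ (1 - θ) ≤ θ * x + (1 - θ) * y :=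
        Real.geom_mean_le_arith_mean2_weighted hθ0 (by linarith) hx hy (by ring)
    _ ≤ x + y := by nlinarith

theorem rpow_eq_mul_sq_rpow_mul_rpow_neg {a t : ℝ} (ha : 0 ≤ a) (ht : 0 < t) (γ : ℝ) :
    a ^ γ = (t * a ^ 2) ^ (γ / 2) * t ^ (-(γ / 2)) := by
  have hsq : (a ^ 2) ^ (γ / 2) = a ^ γ := by
    rw [← Real.rpow_natCast, ← Real.rpow_mul ha]
    congr 1
    ring
  rw [Real.mul_rpow ht.le (by positivity), hsq, mul_comm, ← mul_assoc,
    ← Real.rpow_add ht, neg_add_cancel, Real.rpow_zero, one_mul]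

theorem rpow_mul_rpow_le_of_mul_sq_le {a b t K β : ℝ} (ha : 0 ≤ a) (hb : 0 ≤ b) (ht : 0 < t)
    (hK : t * a ^ 2 ≤ K) (hβ0 : 0 ≤ β) (hβ1 : β ≤ 1) :
    a ^ (1 - β) * b ^ β ≤ K ^ ((1 - β) / 2) * (t ^ (-(1 / (2 - β))) + t * b ^ 2) := by
  have ha_le : a ^ (1 - β) ≤ K ^ ((1 - β) / 2) * t ^ (-((1 - β) / 2)) := by
    rw [rpow_eq_mul_sq_rpow_mul_rpow_neg ha ht]
    gcongr
  have ht_split : t ^ (-((1 - β) / 2)) * t ^ (-(β / 2)) = (t ^ (-(1 / (2 - β)))) ^ (1 - β / 2) := by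
    rw [← Real.rpow_add ht, ← Real.rpow_mul ht.le]
    have : 2 - β ≠ 0 := by linarith
    congr 1
    field_simp
    ring
  calc a ^ (1 - β) * b ^ β
      ≤ K ^ ((1 - β) / 2) * t ^ (-((1 - β) / 2)) * ((t * b ^ 2) ^ (β / 2) * t ^ (-(β / 2))) := by
        rw [← rpow_eq_mul_sq_rpow_mul_rpow_neg hb ht]
        gcongr
    _ = K ^ ((1 - β) / 2) * ((t * b ^ 2) ^ (β / 2) * (t ^ (-(1 / (2 - β)))) ^ (1 - β / 2)) := by
        rw [← ht_split]
        ring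
    _ ≤ K ^ ((1 - β) / 2) * (t ^ (-(1 / (2 - β))) + t * b ^ 2) := by
        have hK0 : 0 ≤ K := (by positivity : 0 ≤ t * a ^ 2).trans hK
        rw [add_comm (t ^ _)]
        gcongr
        exact rpow_mul_rpow_one_sub_le_add (by positivity) (by positivity) (by linarith) (by linarith)

theorem interpolated_time_integrable_general (T C q : ℝ)
    (hq3 : 3 < q) (hq6 : q < 6)
    (f g : ℝ → ℝ) (hf0 : ∀ t, 0 ≤ f t) (hg0 : ∀ t, 0 ≤ g t)
    (hfm : Measurable f) (hgm : Measurable g)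
    (hgint : IntegrableOn (fun t => t * g t ^ 2) (Ioc (0:ℝ) T) volume)
    (hsup : ∀ t ∈ Ioc (0:ℝ) T, t * f t ^ 2 ≤ C) :
    ∃ C' : ℝ, 0 < C' ∧
      (∀ t ∈ Ioc (0:ℝ) T,
        f t ^ ((6 - q) / (2 * q)) * g t ^ ((3 * q - 6) / (2 * q)) ≤
          C' * t ^ (-(2 * q / (q + 6))) + C' * (t * g t ^ 2)) ∧
      IntegrableOn
        (fun t => f t ^ ((6 - q) / (2 * q)) * g t ^ ((3 * q - 6) / (2 * q)))
        (Ioc (0:ℝ) T) volume := by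
  set β := (3 * q - 6) / (2 * q)
  have hβ0 : 0 ≤ β := div_nonneg (by linarith) (by linarith)
  have hβ1 : β ≤ 1 := by rw [div_le_one (by linarith)]; linarith
  have hα : (6 - q) / (2 * q) = 1 - β := by
    simp only [β]
    field_simp
    ring
  have hr : 1 / (2 - β) = 2 * q / (q + 6) := by
    rw [show 2 - β = (q + 6) / (2 * q) by simp only [β]; field_simp; ring, one_div_div]
  have hr1 : 2 * q / (q + 6) < 1 := by rw [div_lt_one (by linarith)]; linarith
  set C' := |C| ^ ((1 - β) / 2) + 1
  have hbound : ∀ t ∈ Ioc (0:ℝ) T,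
      f t ^ (1 - β) * g t ^ β ≤ C' * t ^ (-(2 * q / (q + 6))) + C' * (t * g t ^ 2) := by
    intro t ht
    calc f t ^ (1 - β) * g t ^ β
        ≤ |C| ^ ((1 - β) / 2) * (t ^ (-(2 * q / (q + 6))) + t * g t ^ 2) := hr ▸
          rpow_mul_rpow_le_of_mul_sq_le (hf0 t) (hg0 t) ht.1
            ((hsup t ht).trans (le_abs_self C)) hβ0 hβ1
      _ ≤ C' * (t ^ (-(2 * q / (q + 6))) + t * g t ^ 2) := by
        have := hg0 t
        gcongr
        · have := ht.1
          positivity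
        · exact le_add_of_nonneg_right zero_le_one
      _ = C' * t ^ (-(2 * q / (q + 6))) + C' * (t * g t ^ 2) := mul_add _ _ _
  rw [hα]
  refine ⟨C', by positivity, hbound, ?_⟩
  have hpow : IntegrableOn (fun t : ℝ => t ^ (-(2 * q / (q + 6)))) (Ioc 0 T) volume :=
    (intervalIntegral.intervalIntegrable_rpow' (by linarith)).1
  refine ((hpow.const_mul C').add (hgint.const_mul C')).mono'
    (by fun_prop : Measurable _).aestronglyMeasurable.restrict ?_
  refine (ae_restrict_iff' measurableSet_Ioc).2 (ae_of_all _ fun t ht => ?_)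
  rw [Real.norm_of_nonneg (by have := hf0 t; have := hg0 t; positivity)]
  exact hbound t ht

/-- Estimate (6.18)/(3d-gronwall): for `q ∈ (3,6)`, if `∫ t f², ∫ t g² ≤ C` and
`sup t f² ≤ C`, then `h = f^{(6-q)/(2q)} g^{(3q-6)/(2q)}` satisfies
`h(t) ≤ C' t^{-2q/(q+6)} + C' t g(t)²` and hence `h ∈ L¹(0,T)`. -/
theorem interpolated_time_integrable (T C q : ℝ) (hT : 0 < T) (hC : 0 ≤ C)
    (hq3 : 3 < q) (hq6 : q < 6)
    (f g : ℝ → ℝ) (hf0 : ∀ t, 0 ≤ f t) (hg0 : ∀ t, 0 ≤ g t)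
    (hfm : Measurable f) (hgm : Measurable g)
    (hfint : IntegrableOn (fun t => t * f t ^ 2) (Ioc (0:ℝ) T) volume)
    (hgint : IntegrableOn (fun t => t * g t ^ 2) (Ioc (0:ℝ) T) volume)
    (hfI : (∫ t in Ioc (0:ℝ) T, t * f t ^ 2) ≤ C)
    (hgI : (∫ t in Ioc (0:ℝ) T, t * g t ^ 2) ≤ C)
    (hsup : ∀ t ∈ Ioc (0:ℝ) T, t * f t ^ 2 ≤ C) :
    ∃ C' : ℝ, 0 < C' ∧
      (∀ t ∈ Ioc (0:ℝ) T,
        f t ^ ((6 - q) / (2 * q)) * g t ^ ((3 * q - 6) / (2 * q)) ≤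
          C' * t ^ (-(2 * q / (q + 6))) + C' * (t * g t ^ 2)) ∧
      IntegrableOn
        (fun t => f t ^ ((6 - q) / (2 * q)) * g t ^ ((3 * q - 6) / (2 * q)))
        (Ioc (0:ℝ) T) volume :=
  interpolated_time_integrable_general T C q hq3 hq6 f g hf0 hg0 hfm hgm hgint hsup
end
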